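/- arXiv:2405.04405 — 4 statements merged into one kernel-verified Lean document; each statement's English description precedes it below -/
import Mathlib

section
/- For every countable type α there exists a function f : α → ℝ such that the map sending each finite multiset M over α to the sum ∑_{x ∈ M} f(x) (summed with multiplicity) is injective on finite multisets. -/
/-!
Take the values of `f` to be `ℚ`-linearly independent reals, which is possible since `ℝ` has
infinite dimension over `ℚ`. The sum of `f` over a multiset is then the linear combination of these
values with the multiplicities as coefficients, so linear independence recovers the multiplicities.
-/

open Cardinal

theorem Multiset.sum_map_eq_linearCombination_toFinsupp {ι M : Type*} [DecidableEq ι]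
    [AddCommMonoid M] (v : ι → M) (s : Multiset ι) :
    (s.map v).sum = Finsupp.linearCombination ℕ v (Multiset.toFinsupp s) := by
  induction s using Multiset.induction_on with
  | empty => simp
  | cons a s ih => simp [ih, ← Multiset.singleton_add, Finsupp.linearCombination_single]

theorem LinearIndependent.injective_multiset_sum_map {ι M : Type*} [AddCommMonoid M]
    {v : ι → M} (hv : LinearIndependent ℕ v) :
    Function.Injective fun s : Multiset ι => (s.map v).sum := by
  classical
  intro s t hst
  simp only [Multiset.sum_map_eq_linearCombination_toFinsupp] at hst
  exact Multiset.toFinsupp.injective (hv hst)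

theorem exists_linearIndependent_nat_of_aleph0_le_rank {K V : Type*} [DivisionRing K]
    [AddCommGroup V] [Module K V] (h : ℵ₀ ≤ Module.rank K V) :
    ∃ v : ℕ → V, LinearIndependent K v := by
  obtain ⟨s, hs, hli⟩ := le_rank_iff_exists_linearIndependent.1 h
  have : Infinite s := Cardinal.infinite_iff.2 hs.ge
  exact ⟨_, hli.linearIndependent.comp _ (Infinite.natEmbedding s).injective⟩

theorem multiset_sum_embedding_injective (α : Type*) [Countable α] :
    ∃ f : α → ℝ,
      Function.Injective (fun M : Multiset α => (M.map f).sum) := by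
  obtain ⟨v, hv⟩ := exists_linearIndependent_nat_of_aleph0_le_rank
    (Real.rank_rat_real ▸ aleph0_le_continuum)
  obtain ⟨enc, henc⟩ := Countable.exists_injective_nat α
  exact ⟨v ∘ enc, ((hv.comp enc henc).restrict_scalars' ℕ).injective_multiset_sum_map⟩
end

section
/- For every countable type α there exists a function f : α → ℝ such that every bag-scoring function S : Multiset α → ℝ can be written as S(M) = g(∑_{x ∈ M} f(x)) for some function g : ℝ → ℝ (the same f works for all S). -/
open Classical in
theorem deep_sets_decomposition (α : Type*) [Countable α] :
    ∃ f : α → ℝ, ∀ S : Multiset α → ℝ, ∃ g : ℝ → ℝ,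
      ∀ M : Multiset α, S M = g ((M.map f).sum) := by
  obtain ⟨e, he⟩ := exists_injective_nat α
  -- p x is a prime, distinct for distinct x
  set p : α → ℕ := fun x => Nat.nth Nat.Prime (e x) with hp
  have hpprime : ∀ x, (p x).Prime := fun x =>
    Nat.nth_mem_of_infinite Nat.infinite_setOf_prime _
  have hpinj : Function.Injective p :=
    (Nat.nth_injective Nat.infinite_setOf_prime).comp he
  set f : α → ℝ := fun x => Real.log (p x) with hf
  refine ⟨f, fun S => ?_⟩
  -- sum of f over M equals log of the prime product
  have key : ∀ M : Multiset α,
      (M.map f).sum = Real.log ((M.map p).prod : ℕ) := by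
    intro M
    induction M using Multiset.induction with
    | empty => simp
    | cons a s ih =>
        simp only [Multiset.map_cons, Multiset.sum_cons, Multiset.prod_cons, ih]
        rw [Nat.cast_mul, Real.log_mul]
        · exact_mod_cast (hpprime a).pos.ne'
        · have : 0 < (s.map p).prod := by
            apply Multiset.prod_pos
            intro q hq
            obtain ⟨x, _, rfl⟩ := Multiset.mem_map.mp hq
            exact (hpprime x).pos
          exact_mod_cast this.ne'
  -- the map M ↦ sum is injective
  have hFinj : Function.Injective (fun M : Multiset α => (M.map f).sum) := by
    intro M N h
    simp only [key] at h
    have hMpos : 0 < (M.map p).prod := Multiset.prod_pos (by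
      intro q hq; obtain ⟨x, _, rfl⟩ := Multiset.mem_map.mp hq; exact (hpprime x).pos)
    have hNpos : 0 < (N.map p).prod := Multiset.prod_pos (by
      intro q hq; obtain ⟨x, _, rfl⟩ := Multiset.mem_map.mp hq; exact (hpprime x).pos)
    have hprod : (M.map p).prod = (N.map p).prod := by
      have := Real.log_injOn_pos (Set.mem_Ioi.mpr (by exact_mod_cast hMpos))
        (Set.mem_Ioi.mpr (by exact_mod_cast hNpos)) h
      exact_mod_cast this
    -- unique factorization: the multisets of primes coincide
    have hmaps : M.map p = N.map p := by
      have hrel := UniqueFactorizationMonoid.factors_unique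
        (fun q hq => by
          obtain ⟨x, _, rfl⟩ := Multiset.mem_map.mp hq
          exact (hpprime x))
        (fun q hq => by
          obtain ⟨x, _, rfl⟩ := Multiset.mem_map.mp hq
          exact (hpprime x))
        (show Associated (Multiset.map p M).prod (Multiset.map p N).prod by rw [hprod])
      refine Multiset.rel_eq.mp ?_
      exact hrel.mono (fun a _ b _ hab => associated_iff_eq.mp hab)
    exact Multiset.map_injective hpinj hmaps
  refine ⟨S ∘ Function.invFun (fun M : Multiset α => (M.map f).sum), fun M => ?_⟩
  simp [Function.leftInverse_invFun hFinj M]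
end

section
/- Let V be a real vector space, f : α → V, t : V → ℝ, g : V → ℝ, and y : α → ℝ an instance-labeling function with y(x) ∈ {0, 1} for all x. Define the attention-pooled bag score of a family l : Fin n → α (n ≥ 1) as S(l) = g(∑_{k} a_k • f(l k)), where a_k = exp(t(f(l k))) / ∑_{τ} exp(t(f(l τ))), and the MIL bag label Y(l) = 1 if some k has y(l k) = 1, and Y(l) = 0 otherwise. If S(l) = Y(l) for every n ≥ 1 and every family l : Fin n → α, then g(f(x)) = y(x) for every instance x. -/
open Classical in
theorem attention_pool_instance_estimator {α : Type*} {V : Type*} [AddCommGroup V] [Module ℝ V]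
    (f : α → V) (t : V → ℝ) (g : V → ℝ) (y : α → ℝ)
    (hy : ∀ x, y x = 0 ∨ y x = 1)
    (hS : ∀ (n : ℕ), 1 ≤ n → ∀ l : Fin n → α,
      g (∑ k : Fin n,
          (Real.exp (t (f (l k))) / ∑ τ : Fin n, Real.exp (t (f (l τ)))) • f (l k)) =
        (if ∃ k, y (l k) = 1 then (1 : ℝ) else 0)) :
    ∀ x : α, g (f x) = y x := by
  intro x
  have h := hS 1 le_rfl (fun _ => x)
  simp [Fin.sum_univ_one, div_self (Real.exp_ne_zero _)] at h
  rw [h]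
  rcases hy x with h0 | h1
  · rw [if_neg (by rw [h0]; norm_num), h0]
  · rw [if_pos h1, h1]
end

section
/- For every countable type α there exists a function f : α → ℝ such that the map sending each finite set X ⊆ α to ∑_{x ∈ X} f(x) is injective on finite sets. -/
theorem finset_sum_embedding_injective (α : Type*) [Countable α] :
    ∃ f : α → ℝ,
      Function.Injective (fun X : Finset α => ∑ x ∈ X, f x) := by
  obtain ⟨e, he⟩ := Countable.exists_injective_nat α
  refine ⟨fun x => (2 : ℝ) ^ (e x), fun X Y h => ?_⟩
  have key : ∀ Z : Finset α, ∑ x ∈ Z, (2 : ℝ) ^ (e x)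
      = ((∑ i ∈ Z.image e, 2 ^ i : ℕ) : ℝ) := by
    intro Z
    rw [Finset.sum_image (fun a _ b _ hab => he hab)]
    push_cast
    rfl
  simp only [] at h
  rw [key, key, Nat.cast_inj] at h
  exact Finset.image_injective he (Finset.geomSum_injective le_rfl h)
end
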